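/- arXiv:1912.10574 — 2 statements merged into one kernel-verified Lean document; each statement's English description precedes it below -/
import Mathlib

section
/- Let a < b be real numbers, let μ be an integrable function on ℝ, and let h be a real-valued C¹ function on ℝ. Then |∫_a^b μ(t) e^{i h(t)} dt − e^{i h(b)} ∫_a^b μ(t) dt| ≤ ‖μ‖_{L¹[a,b]} · ‖h'‖_{L^∞[a,b]} · (b − a). -/
/-!
Write the difference as `∫ t in a..b, μ t * (exp (i h t) - exp (i h b))`. Since `x ↦ exp (i x)`
is 1-Lipschitz and, by the mean value theorem, `h` is `sup |h'|`-Lipschitz on `[a, b]`, the second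
factor has norm at most `sup |h'| * (b - a)` there.
-/

open MeasureTheory Complex Set

theorem le_iSup_Icc_of_continuousOn {f : ℝ → ℝ} {a b c : ℝ} (hf : ContinuousOn f (Icc a b))
    (hc : c ∈ Icc a b) : f c ≤ ⨆ t : Icc a b, f t := by
  rw [← sSup_image']
  exact hf.le_sSup_image_Icc hc

theorem norm_cexp_I_mul_sub_cexp_I_mul_le (x y : ℝ) :
    ‖cexp (I * x) - cexp (I * y)‖ ≤ |x - y| := by
  have hfactor : cexp (I * x) - cexp (I * y) = cexp (I * y) * (cexp (I * ↑(x - y)) - 1) := by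
    rw [mul_sub, ← Complex.exp_add]
    push_cast
    ring_nf
  rw [hfactor, norm_mul, Complex.norm_exp_I_mul_ofReal, one_mul]
  exact Real.norm_exp_I_mul_ofReal_sub_one_le

theorem abs_sub_le_iSup_abs_deriv_mul {h : ℝ → ℝ} (hh : ContDiff ℝ 1 h) {a b s t : ℝ}
    (hs : s ∈ Icc a b) (ht : t ∈ Icc a b) :
    |h s - h t| ≤ (⨆ x : Icc a b, |deriv h x|) * |s - t| := by
  have hbound : ∀ x ∈ Icc a b, ‖deriv h x‖ ≤ ⨆ x : Icc a b, |deriv h x| := fun x hx =>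
    le_iSup_Icc_of_continuousOn (hh.continuous_deriv le_rfl).abs.continuousOn hx
  exact (convex_Icc a b).norm_image_sub_le_of_norm_deriv_le
    (fun x _ => (hh.differentiable one_ne_zero).differentiableAt) hbound ht hs

theorem norm_integral_mul_sub_mul_integral_le {μ : ℝ → ℝ} {g : ℝ → ℂ} {a b C : ℝ}
    (hab : a ≤ b) (hμ : IntervalIntegrable μ volume a b) (hg : ContinuousOn g (uIcc a b))
    (hC : ∀ t ∈ Icc a b, ‖g t - g b‖ ≤ C) :
    ‖(∫ t in a..b, (μ t : ℂ) * g t) - g b * ∫ t in a..b, (μ t : ℂ)‖ ≤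
      (∫ t in a..b, |μ t|) * C := by
  have hμℂ : IntervalIntegrable (fun t => (μ t : ℂ)) volume a b :=
    intervalIntegrable_iff.2 (intervalIntegrable_iff.1 hμ).ofReal
  have hsplit : (∫ t in a..b, (μ t : ℂ) * g t) - g b * ∫ t in a..b, (μ t : ℂ) =
      ∫ t in a..b, (μ t : ℂ) * (g t - g b) := by
    simp_rw [mul_sub]
    rw [intervalIntegral.integral_sub (hμℂ.mul_continuousOn hg) (hμℂ.mul_const _),
      intervalIntegral.integral_mul_const, mul_comm]
  rw [hsplit, ← intervalIntegral.integral_mul_const]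
  refine intervalIntegral.norm_integral_le_of_norm_le hab
    (Filter.Eventually.of_forall fun t ht => ?_) (hμ.abs.mul_const C)
  rw [norm_mul, Complex.norm_real, Real.norm_eq_abs]
  exact mul_le_mul_of_nonneg_left (hC t (Ioc_subset_Icc_self ht)) (abs_nonneg _)

/-- integration-by-parts approximation of an oscillatory integral. -/
theorem stmt0 (a b : ℝ) (hab : a < b) (μ : ℝ → ℝ) (hμ : Integrable μ)
    (h : ℝ → ℝ) (hh : ContDiff ℝ 1 h) :
    ‖(∫ t in a..b, (μ t : ℂ) * Complex.exp (Complex.I * h t)) -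
        Complex.exp (Complex.I * h b) * ∫ t in a..b, (μ t : ℂ)‖ ≤
      (∫ t in a..b, |μ t|) * (⨆ t : Set.Icc a b, |deriv h t|) * (b - a) := by
  have hcont : Continuous h := hh.continuous
  rw [mul_assoc]
  refine norm_integral_mul_sub_mul_integral_le hab.le hμ.intervalIntegrable
    (by fun_prop) fun t ht => ?_
  have hb : b ∈ Icc a b := right_mem_Icc.2 hab.le
  calc ‖cexp (I * h t) - cexp (I * h b)‖ ≤ |h t - h b| := norm_cexp_I_mul_sub_cexp_I_mul_le _ _
    _ ≤ (⨆ x : Icc a b, |deriv h x|) * |t - b| := abs_sub_le_iSup_abs_deriv_mul hh ht hb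
    _ ≤ (⨆ x : Icc a b, |deriv h x|) * (b - a) := by
        gcongr
        · exact Real.iSup_nonneg fun _ => abs_nonneg _
        · rw [abs_sub_le_iff]
          constructor <;> linarith [ht.1, ht.2]
end

section
/- Let f : ℝ → ℂ be Lebesgue integrable on [a,b] and let α be a real number. Then |∫_a^b f(t) e^{iα t²} dt − ∫_a^b f(t) dt · e^{iα b²}| ≤ 2|α| max(|a|,|b|) (b−a) ∫_a^b |f(t)| dt. -/
open MeasureTheory Complex

theorem norm_exp_I_mul_ofReal_sub_exp_I_mul_ofReal_le (x y : ℝ) :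
    ‖exp (I * x) - exp (I * y)‖ ≤ |x - y| := by
  have hfactor : exp (I * x) - exp (I * y) = exp (I * y) * (exp (I * ↑(x - y)) - 1) := by
    rw [mul_sub, ← Complex.exp_add]; push_cast; ring_nf
  rw [hfactor, norm_mul, mul_comm I, Complex.norm_exp_ofReal_mul_I, one_mul]
  exact Real.norm_exp_I_mul_ofReal_sub_one_le

theorem norm_integral_mul_sub_integral_mul_const_le {𝕜 : Type*} [RCLike 𝕜] {f g : ℝ → 𝕜}
    {a b C : ℝ} {c : 𝕜} (hab : a ≤ b) (hf : IntervalIntegrable f volume a b)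
    (hg : ContinuousOn g (Set.uIcc a b)) (hgc : ∀ t ∈ Set.Ioc a b, ‖g t - c‖ ≤ C) :
    ‖(∫ t in a..b, f t * g t) - (∫ t in a..b, f t) * c‖ ≤ C * ∫ t in a..b, ‖f t‖ := by
  have hsplit : (∫ t in a..b, f t * g t) - (∫ t in a..b, f t) * c =
      ∫ t in a..b, f t * (g t - c) := by
    simp only [mul_sub]
    rw [intervalIntegral.integral_sub (hf.mul_continuousOn hg) (hf.mul_const c),
      intervalIntegral.integral_mul_const]
  rw [hsplit, ← intervalIntegral.integral_const_mul]
  refine intervalIntegral.norm_integral_le_of_norm_le hab (ae_of_all _ fun t ht => ?_)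
    (hf.norm.const_mul C)
  rw [norm_mul, mul_comm]
  exact mul_le_mul_of_nonneg_right (hgc t ht) (norm_nonneg _)

theorem norm_integral_mul_exp_sub_integral_mul_exp_le {f : ℝ → ℂ} {h : ℝ → ℝ} {a b K : ℝ}
    (hab : a ≤ b) (hf : IntervalIntegrable f volume a b) (hh : ContinuousOn h (Set.uIcc a b))
    (hK : ∀ t ∈ Set.Ioc a b, |h t - h b| ≤ K) :
    ‖(∫ t in a..b, f t * exp (I * h t)) - (∫ t in a..b, f t) * exp (I * h b)‖ ≤
      K * ∫ t in a..b, ‖f t‖ := by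
  refine norm_integral_mul_sub_integral_mul_const_le hab hf ?_ fun t ht =>
    (norm_exp_I_mul_ofReal_sub_exp_I_mul_ofReal_le _ _).trans (hK t ht)
  exact (continuous_exp.comp_continuousOn
    (continuous_const.mul continuous_ofReal |>.comp_continuousOn hh))

theorem abs_mul_sq_sub_mul_sq_le {a b t : ℝ} (α : ℝ) (ht : t ∈ Set.Icc a b) :
    |α * t ^ 2 - α * b ^ 2| ≤ 2 * |α| * max |a| |b| * (b - a) := by
  have habs_t : |t| ≤ max |a| |b| := abs_le_max_abs_abs ht.1 ht.2
  have habs_add : |t + b| ≤ 2 * max |a| |b| := by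
    linarith [abs_add_le t b, le_max_right |a| |b|]
  have habs_sub : |t - b| ≤ b - a := by
    rw [abs_sub_comm, abs_of_nonneg (by linarith [ht.2])]
    linarith [ht.1]
  calc |α * t ^ 2 - α * b ^ 2| = |α| * (|t + b| * |t - b|) := by
        rw [← abs_mul, ← abs_mul]; ring_nf
    _ ≤ |α| * (2 * max |a| |b| * (b - a)) := by gcongr
    _ = 2 * |α| * max |a| |b| * (b - a) := by ring

/-- removal of a quadratic phase from an integral. -/
theorem stmt18 (a b α : ℝ) (hab : a ≤ b) (f : ℝ → ℂ)
    (hf : IntegrableOn f (Set.Icc a b)) :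
    ‖(∫ t in a..b, f t * Complex.exp (Complex.I * (α * t ^ 2))) -
        (∫ t in a..b, f t) * Complex.exp (Complex.I * (α * b ^ 2))‖ ≤
      2 * |α| * max |a| |b| * (b - a) * ∫ t in a..b, ‖f t‖ := by
  have hfI : IntervalIntegrable f volume a b :=
    (intervalIntegrable_iff_integrableOn_Icc_of_le hab).2 hf
  have key := norm_integral_mul_exp_sub_integral_mul_exp_le (h := fun t => α * t ^ 2) hab hfI
    (by fun_prop) fun t ht => abs_mul_sq_sub_mul_sq_le α (Set.Ioc_subset_Icc_self ht)
  simpa only [ofReal_mul, ofReal_pow] using key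
end
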